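/- For every n ∈ ℕ, Σ_{λ ∈ P_n} 2ℓ(λ^d) = Σ_{λ ∈ P_n} 2ℓ(λ^e) = Σ_{λ ∈ P_n} (ℓ(λ^o) + ℓ(λ^e) − ℓ(λ^r)) = Σ_{λ ∈ P_n} (ℓ((λ^r)~) + ℓ(λ^e) − ℓ(λ^r)), where (λ^r)~ is the image of λ^r under the Glaisher map. -/
import Mathlib

open scoped BigOperators Classical

/-- `mr s` is the multiset of parts of `s` having odd multiplicity, each taken once:
the partition `λ^r`. -/
def mr (s : Multiset ℕ) : Multiset ℕ := s.dedup.filter fun i => ¬ Even (s.count i)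

/-- `md s` has each part `i` with multiplicity `⌊m_i(s)/2⌋`: the partition `λ^d`. -/
def md (s : Multiset ℕ) : Multiset ℕ :=
  s.dedup.bind fun i => Multiset.replicate (s.count i / 2) i

/-- `mo s` is the multiset of odd parts of `s`: the partition `λ^o`. -/
def mo (s : Multiset ℕ) : Multiset ℕ := s.filter fun i => ¬ Even i

/-- `me s` is the multiset of halves of the even parts of `s`: the partition `λ^e`. -/
def me (s : Multiset ℕ) : Multiset ℕ := (s.filter fun i => Even i).map (· / 2)

/-- The Glaisher map: a part `a = 2^p * q` (`q` odd) contributes `2^p` copies of `q`. -/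
def glaisher (s : Multiset ℕ) : Multiset ℕ :=
  s.bind fun a => Multiset.replicate (2 ^ (a.factorization 2)) (a / 2 ^ (a.factorization 2))

/-- `IsPartitionOf n s` : `s` is a partition of `n` (all parts positive, sum `n`). -/
def IsPartitionOf (n : ℕ) (s : Multiset ℕ) : Prop := (∀ i ∈ s, 0 < i) ∧ s.sum = n

/-! ### Auxiliary lemmas -/

lemma two_pow_mul_op (a : ℕ) :
    2 ^ (a.factorization 2) * (a / 2 ^ (a.factorization 2)) = a :=
  Nat.ordProj_mul_ordCompl_eq_self a 2

lemma op_pos {a : ℕ} (ha : 0 < a) : 0 < a / 2 ^ (a.factorization 2) :=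
  Nat.ordCompl_pos 2 ha.ne'

lemma op_odd {a : ℕ} (ha : 0 < a) : ¬ Even (a / 2 ^ (a.factorization 2)) := fun hE =>
  Nat.not_dvd_ordCompl Nat.prime_two ha.ne' hE.two_dvd

lemma sum_map_ite (s : Multiset ℕ) (p : ℕ → Prop) [DecidablePred p] (f : ℕ → ℕ) :
    (s.map (fun a => if p a then f a else 0)).sum = ((s.filter p).map f).sum := by
  induction s using Multiset.induction with
  | empty => simp
  | cons a s ih => by_cases h : p a <;> simp [h, ih]

lemma count_md (s : Multiset ℕ) (i : ℕ) : (md s).count i = s.count i / 2 := by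
  rw [md, Multiset.count_bind]
  have h1 : (Multiset.map (fun j => (Multiset.replicate (s.count j / 2) j).count i) s.dedup)
      = Multiset.map (fun j => if j = i then s.count j / 2 else 0) s.dedup := by
    apply Multiset.map_congr rfl
    intro j _
    rw [Multiset.count_replicate]
  rw [h1, sum_map_ite s.dedup (fun j => j = i) (fun j => s.count j / 2),
    Multiset.filter_eq', Multiset.count_dedup]
  by_cases h : i ∈ s
  · simp [h]
  · simp [h, Multiset.count_eq_zero_of_notMem h]

lemma count_mr (s : Multiset ℕ) (i : ℕ) : (mr s).count i = s.count i % 2 := by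
  rw [mr, Multiset.count_filter]
  by_cases h : i ∈ s
  · by_cases he : Even (s.count i)
    · rw [if_neg (not_not_intro he)]
      rw [Nat.even_iff] at he
      omega
    · rw [if_pos he, Multiset.count_dedup, if_pos h]
      rw [Nat.not_even_iff] at he
      omega
  · have h0 : s.count i = 0 := Multiset.count_eq_zero_of_notMem h
    simp [h0]

lemma md_md_mr (s : Multiset ℕ) : md s + md s + mr s = s := by
  ext i
  simp only [Multiset.count_add, count_md, count_mr]
  omega

lemma mr_nodup (s : Multiset ℕ) : (mr s).Nodup := (Multiset.nodup_dedup s).filter _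

lemma mem_of_mem_mr {s : Multiset ℕ} {a : ℕ} (h : a ∈ mr s) : a ∈ s := by
  rw [mr, Multiset.mem_filter, Multiset.mem_dedup] at h; exact h.1

lemma mem_of_mem_md {s : Multiset ℕ} {a : ℕ} (h : a ∈ md s) : a ∈ s := by
  rw [← Multiset.count_pos] at h ⊢
  rw [count_md] at h
  omega

lemma mem_glaisher {s : Multiset ℕ} {b : ℕ} :
    b ∈ glaisher s ↔ ∃ a ∈ s, b = a / 2 ^ (a.factorization 2) := by
  simp only [glaisher, Multiset.mem_bind, Multiset.mem_replicate]
  constructor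
  · rintro ⟨a, ha, -, rfl⟩; exact ⟨a, ha, rfl⟩
  · rintro ⟨a, ha, rfl⟩; exact ⟨a, ha, by positivity, rfl⟩

lemma glaisher_sum (s : Multiset ℕ) : (glaisher s).sum = s.sum := by
  rw [glaisher, Multiset.sum_bind]
  have h1 : (Multiset.map (fun a =>
      (Multiset.replicate (2 ^ (a.factorization 2)) (a / 2 ^ (a.factorization 2))).sum) s)
      = Multiset.map id s := by
    apply Multiset.map_congr rfl
    intro a _
    rw [Multiset.sum_replicate, smul_eq_mul, two_pow_mul_op, id]
  rw [h1, Multiset.map_id]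

lemma count_glaisher (s : Multiset ℕ) (q : ℕ) :
    (glaisher s).count q =
      ((s.filter (fun a => a / 2 ^ (a.factorization 2) = q)).map
        (fun a => 2 ^ (a.factorization 2))).sum := by
  rw [glaisher, Multiset.count_bind]
  have h1 : (Multiset.map (fun a =>
      (Multiset.replicate (2 ^ (a.factorization 2)) (a / 2 ^ (a.factorization 2))).count q) s)
      = Multiset.map (fun a => if a / 2 ^ (a.factorization 2) = q
          then 2 ^ (a.factorization 2) else 0) s := by
    apply Multiset.map_congr rfl
    intro a _
    rw [Multiset.count_replicate]
  rw [h1, sum_map_ite]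

/-- The exponents finset of a multiset `u` at odd part `q`. -/
noncomputable def expF (u : Multiset ℕ) (q : ℕ) : Finset ℕ :=
  ((u.filter (fun b => b / 2 ^ (b.factorization 2) = q)).map
    (fun b => b.factorization 2)).toFinset

lemma eq_of_op_eq_of_v_eq {a b : ℕ}
    (hop : b / 2 ^ (b.factorization 2) = a / 2 ^ (a.factorization 2))
    (hv : b.factorization 2 = a.factorization 2) : b = a := by
  have hb := two_pow_mul_op b
  rw [hop, hv, two_pow_mul_op a] at hb
  exact hb.symm

lemma expF_nodup_val (u : Multiset ℕ) (hu : u.Nodup) (q : ℕ) :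
    ((u.filter (fun b => b / 2 ^ (b.factorization 2) = q)).map
      (fun b => b.factorization 2)).Nodup := by
  refine Multiset.Nodup.map_on ?_ (hu.filter _)
  intro x hx y hy hxy
  rw [Multiset.mem_filter] at hx hy
  exact eq_of_op_eq_of_v_eq (hx.2.trans hy.2.symm) hxy

lemma sum_expF (u : Multiset ℕ) (hu : u.Nodup) (q : ℕ) :
    ∑ i ∈ expF u q, 2 ^ i = (glaisher u).count q := by
  rw [count_glaisher]
  have hval : (expF u q).val
      = (u.filter (fun b => b / 2 ^ (b.factorization 2) = q)).map
        (fun b => b.factorization 2) := by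
    rw [expF, Multiset.toFinset_val, Multiset.dedup_eq_self.mpr (expF_nodup_val u hu q)]
  show ((expF u q).val.map (2 ^ ·)).sum = _
  rw [hval, Multiset.map_map]
  rfl

lemma mem_iff_v_mem_expF (u : Multiset ℕ) (a : ℕ) :
    a ∈ u ↔ a.factorization 2 ∈ expF u (a / 2 ^ (a.factorization 2)) := by
  simp only [expF, Multiset.mem_toFinset, Multiset.mem_map, Multiset.mem_filter]
  constructor
  · intro hau; exact ⟨a, ⟨hau, rfl⟩, rfl⟩
  · rintro ⟨b, ⟨hbu, hop⟩, hv⟩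
    rwa [eq_of_op_eq_of_v_eq hop hv] at hbu

lemma glaisher_inj {s t : Multiset ℕ} (hs : s.Nodup) (ht : t.Nodup)
    (h : glaisher s = glaisher t) : s = t := by
  have hexp : ∀ q, expF s q = expF t q := by
    intro q
    apply Finset.geomSum_injective (le_refl 2)
    show ∑ i ∈ expF s q, 2 ^ i = ∑ i ∈ expF t q, 2 ^ i
    rw [sum_expF s hs, sum_expF t ht, h]
  rw [Multiset.Nodup.ext hs ht]
  intro a
  rw [mem_iff_v_mem_expF s a, mem_iff_v_mem_expF t a, hexp]

/-! ### The bijection -/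

noncomputable def phi (n : ℕ) (l : Nat.Partition n) : Nat.Partition n where
  parts := glaisher (mr l.parts) + (md l.parts).map (fun x => 2 * x)
  parts_pos := by
    intro i hi
    rw [Multiset.mem_add] at hi
    rcases hi with hi | hi
    · rw [mem_glaisher] at hi
      obtain ⟨a, ha, rfl⟩ := hi
      exact op_pos (l.parts_pos (mem_of_mem_mr ha))
    · rw [Multiset.mem_map] at hi
      obtain ⟨c, hc, rfl⟩ := hi
      have := l.parts_pos (mem_of_mem_md hc)
      omega
  parts_sum := by
    rw [Multiset.sum_add, glaisher_sum, Multiset.sum_map_mul_left, Multiset.map_id']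
    have := congrArg Multiset.sum (md_md_mr l.parts)
    rw [Multiset.sum_add, Multiset.sum_add, l.parts_sum] at this
    omega

lemma mo_phi (n : ℕ) (l : Nat.Partition n) : mo ((phi n l).parts) = glaisher (mr l.parts) := by
  show mo (glaisher (mr l.parts) + (md l.parts).map (fun x => 2 * x)) = _
  rw [mo, Multiset.filter_add]
  have h1 : Multiset.filter (fun i => ¬ Even i) (glaisher (mr l.parts)) = glaisher (mr l.parts) := by
    rw [Multiset.filter_eq_self]
    intro a ha
    rw [mem_glaisher] at ha
    obtain ⟨b, hb, rfl⟩ := ha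
    exact op_odd (l.parts_pos (mem_of_mem_mr hb))
  have h2 : Multiset.filter (fun i => ¬ Even i) ((md l.parts).map (fun x => 2 * x)) = 0 := by
    rw [Multiset.filter_eq_nil]
    intro a ha
    rw [Multiset.mem_map] at ha
    obtain ⟨c, _, rfl⟩ := ha
    exact not_not_intro (even_two_mul c)
  rw [h1, h2, add_zero]

lemma me_phi (n : ℕ) (l : Nat.Partition n) : me ((phi n l).parts) = md l.parts := by
  show me (glaisher (mr l.parts) + (md l.parts).map (fun x => 2 * x)) = _
  rw [me, Multiset.filter_add]
  have h1 : Multiset.filter (fun i => Even i) (glaisher (mr l.parts)) = 0 := by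
    rw [Multiset.filter_eq_nil]
    intro a ha
    rw [mem_glaisher] at ha
    obtain ⟨b, hb, rfl⟩ := ha
    exact op_odd (l.parts_pos (mem_of_mem_mr hb))
  have h2 : Multiset.filter (fun i => Even i) ((md l.parts).map (fun x => 2 * x))
      = (md l.parts).map (fun x => 2 * x) := by
    rw [Multiset.filter_eq_self]
    intro a ha
    rw [Multiset.mem_map] at ha
    obtain ⟨c, _, rfl⟩ := ha
    exact even_two_mul c
  rw [h1, h2]
  simp [Multiset.map_map, Nat.mul_div_cancel_left _ two_pos]

lemma phi_inj (n : ℕ) : Function.Injective (phi n) := by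
  intro l m h
  have hp : (phi n l).parts = (phi n m).parts := congrArg _ h
  have hmd : md l.parts = md m.parts := by
    rw [← me_phi n l, ← me_phi n m, hp]
  have hg : glaisher (mr l.parts) = glaisher (mr m.parts) := by
    rw [← mo_phi n l, ← mo_phi n m, hp]
  have hmr : mr l.parts = mr m.parts :=
    glaisher_inj (mr_nodup _) (mr_nodup _) hg
  apply Nat.Partition.ext
  ext i
  have h1 : (md l.parts).count i = (md m.parts).count i := by rw [hmd]
  have h2 : (mr l.parts).count i = (mr m.parts).count i := by rw [hmr]
  rw [count_md, count_md] at h1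
  rw [count_mr, count_mr] at h2
  omega

/-! ### Cardinality identities -/

lemma card_eq_md_mr (s : Multiset ℕ) :
    Multiset.card s = 2 * Multiset.card (md s) + Multiset.card (mr s) := by
  conv_lhs => rw [← md_md_mr s]
  rw [Multiset.card_add, Multiset.card_add]
  ring

lemma card_eq_mo_me (s : Multiset ℕ) :
    Multiset.card s = Multiset.card (mo s) + Multiset.card (me s) := by
  rw [me, Multiset.card_map, mo, add_comm, ← Multiset.card_add, Multiset.filter_add_not]

/-- `Σ_{λ ∈ P_n} 2ℓ(λ^d) = Σ_{λ ∈ P_n} 2ℓ(λ^e)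
 = Σ_{λ ∈ P_n} (ℓ(λ^o) + ℓ(λ^e) − ℓ(λ^r))
 = Σ_{λ ∈ P_n} (ℓ((λ^r)~) + ℓ(λ^e) − ℓ(λ^r))`. -/
theorem sum_two_length_d (n : ℕ) :
    (∑ l : Nat.Partition n, (2 * (Multiset.card (md l.parts) : ℤ)) =
      ∑ l : Nat.Partition n, (2 * (Multiset.card (me l.parts) : ℤ))) ∧
    (∑ l : Nat.Partition n, (2 * (Multiset.card (md l.parts) : ℤ)) =
      ∑ l : Nat.Partition n,
        ((Multiset.card (mo l.parts) : ℤ) + (Multiset.card (me l.parts) : ℤ)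
          - (Multiset.card (mr l.parts) : ℤ))) ∧
    (∑ l : Nat.Partition n, (2 * (Multiset.card (md l.parts) : ℤ)) =
      ∑ l : Nat.Partition n,
        ((Multiset.card (glaisher (mr l.parts)) : ℤ) + (Multiset.card (me l.parts) : ℤ)
          - (Multiset.card (mr l.parts) : ℤ))) := by
  have hbij : Function.Bijective (phi n) := Finite.injective_iff_bijective.mp (phi_inj n)
  have key2 : ∀ l : Nat.Partition n,
      2 * (Multiset.card (md l.parts) : ℤ) =
        (Multiset.card (mo l.parts) : ℤ) + (Multiset.card (me l.parts) : ℤ)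
          - (Multiset.card (mr l.parts) : ℤ) := by
    intro l
    have h1 := card_eq_md_mr l.parts
    have h2 := card_eq_mo_me l.parts
    omega
  have eq2 : (∑ l : Nat.Partition n, (2 * (Multiset.card (md l.parts) : ℤ)) =
      ∑ l : Nat.Partition n,
        ((Multiset.card (mo l.parts) : ℤ) + (Multiset.card (me l.parts) : ℤ)
          - (Multiset.card (mr l.parts) : ℤ))) :=
    Finset.sum_congr rfl (fun l _ => key2 l)
  have eq1 : (∑ l : Nat.Partition n, (2 * (Multiset.card (md l.parts) : ℤ)) =
      ∑ l : Nat.Partition n, (2 * (Multiset.card (me l.parts) : ℤ))) := by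
    calc ∑ l : Nat.Partition n, (2 * (Multiset.card (md l.parts) : ℤ))
        = ∑ l : Nat.Partition n, (2 * (Multiset.card (me ((phi n l).parts)) : ℤ)) := by
          apply Finset.sum_congr rfl
          intro l _
          rw [me_phi]
      _ = ∑ l : Nat.Partition n, (2 * (Multiset.card (me l.parts) : ℤ)) :=
          hbij.sum_comp (fun l => 2 * (Multiset.card (me l.parts) : ℤ))
  have hglo : (∑ l : Nat.Partition n, (Multiset.card (glaisher (mr l.parts)) : ℤ)) =
      ∑ l : Nat.Partition n, (Multiset.card (mo l.parts) : ℤ) := by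
    calc ∑ l : Nat.Partition n, (Multiset.card (glaisher (mr l.parts)) : ℤ)
        = ∑ l : Nat.Partition n, (Multiset.card (mo ((phi n l).parts)) : ℤ) := by
          apply Finset.sum_congr rfl
          intro l _
          rw [mo_phi]
      _ = ∑ l : Nat.Partition n, (Multiset.card (mo l.parts) : ℤ) :=
          hbij.sum_comp (fun l => (Multiset.card (mo l.parts) : ℤ))
  refine ⟨eq1, eq2, ?_⟩
  rw [eq2]
  rw [show (∑ l : Nat.Partition n,
        ((Multiset.card (mo l.parts) : ℤ) + (Multiset.card (me l.parts) : ℤ)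
          - (Multiset.card (mr l.parts) : ℤ)))
      = (∑ l : Nat.Partition n, (Multiset.card (mo l.parts) : ℤ)) +
        ∑ l : Nat.Partition n,
          ((Multiset.card (me l.parts) : ℤ) - (Multiset.card (mr l.parts) : ℤ)) by
    rw [← Finset.sum_add_distrib]; apply Finset.sum_congr rfl; intro l _; ring]
  rw [show (∑ l : Nat.Partition n,
        ((Multiset.card (glaisher (mr l.parts)) : ℤ) + (Multiset.card (me l.parts) : ℤ)
          - (Multiset.card (mr l.parts) : ℤ)))
      = (∑ l : Nat.Partition n, (Multiset.card (glaisher (mr l.parts)) : ℤ)) +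
        ∑ l : Nat.Partition n,
          ((Multiset.card (me l.parts) : ℤ) - (Multiset.card (mr l.parts) : ℤ)) by
    rw [← Finset.sum_add_distrib]; apply Finset.sum_congr rfl; intro l _; ring]
  rw [hglo]
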